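/- arXiv:2402.18105 — 3 statements merged into one kernel-verified Lean document; each statement's English description precedes it below -/
import Mathlib

section
/- Let (X1, Y1), (X2, Y2), (X3, Y3) be i.i.d. copies of (X, Y), where X is continuous with CDF F and Y categorical with p_k = P(Y = k) > 0. Then Δ := Σ_k p_k ∫ (F_k(x) − F(x))² dF(x) = Σ_{k=1}^K (1/p_k) P(min(X1, X2) > X3, Y1 = Y2 = k) − 1/3. -/
/-!
Conditioning on the third copy, independence gives
`P(min(X₁, X₂) > X₃, Y₁ = Y₂ = k) = ∫ P(X > x, Y = k)² dF(x) = p_k² ∫ (1 - F_k)² dF`.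
Since `∑ p_k = 1` and `∑ p_k F_k = F`, pointwise
`∑ p_k (F_k - F)² = ∑ p_k (1 - F_k)² - (1 - F)²`,
and `∫ (1 - F)² dF = ∫₀¹ (1 - u)² du = 1/3` because `F(X)` is uniform on `[0, 1]` when `F` is
continuous.
-/

open MeasureTheory ProbabilityTheory Set Filter Topology

theorem integral_one_sub_sq_zero_to_one : ∫ y in (0 : ℝ)..1, (1 - y) ^ 2 = 1 / 3 := by
  norm_num [intervalIntegral.integral_comp_sub_left (fun y : ℝ => y ^ 2)]

theorem Finset.sum_mul_sub_sq_of_sum_mul_eq {ι : Type*} (s : Finset ι) {p f : ι → ℝ} {a : ℝ}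
    (hp : ∑ i ∈ s, p i = 1) (hf : ∑ i ∈ s, p i * f i = a) :
    ∑ i ∈ s, p i * (f i - a) ^ 2 = ∑ i ∈ s, p i * (1 - f i) ^ 2 - (1 - a) ^ 2 := by
  have h : ∀ i ∈ s, p i * (f i - a) ^ 2
      = p i * (1 - f i) ^ 2 + (1 - a) * (2 * (p i * f i) - (a + 1) * p i) := fun i _ => by ring
  rw [Finset.sum_congr rfl h, Finset.sum_add_distrib, ← Finset.mul_sum, Finset.sum_sub_distrib,
    ← Finset.mul_sum, ← Finset.mul_sum, hf, hp]
  ring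

namespace MeasureTheory

variable {α : Type*} [MeasurableSpace α] {μ : Measure α} [IsFiniteMeasure μ]

theorem integrable_sub_sq_of_mem_Icc {f g : α → ℝ} (hf : Measurable f) (hg : Measurable g)
    (hf01 : ∀ x, f x ∈ Icc 0 1) (hg01 : ∀ x, g x ∈ Icc 0 1) :
    Integrable (fun x => (f x - g x) ^ 2) μ := by
  refine .of_bound ((hf.sub hg).pow_const 2).aestronglyMeasurable 1 (ae_of_all _ fun x => ?_)
  obtain ⟨hf0, hf1⟩ := hf01 x
  obtain ⟨hg0, hg1⟩ := hg01 x
  rw [Real.norm_of_nonneg (sq_nonneg _)]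
  nlinarith

theorem sum_mul_integral_sub_sq_of_sum_mul_eq {ι : Type*} (s : Finset ι) {p : ι → ℝ}
    {f : ι → α → ℝ} {g : α → ℝ} (hp : ∑ i ∈ s, p i = 1) (hpf : ∀ x, ∑ i ∈ s, p i * f i x = g x)
    (hf : ∀ i, Measurable (f i)) (hg : Measurable g) (hf01 : ∀ i x, f i x ∈ Icc 0 1)
    (hg01 : ∀ x, g x ∈ Icc 0 1) :
    ∑ i ∈ s, p i * ∫ x, (f i x - g x) ^ 2 ∂μ
      = ∑ i ∈ s, p i * ∫ x, (1 - f i x) ^ 2 ∂μ - ∫ x, (1 - g x) ^ 2 ∂μ := by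
  have hone : (1 : ℝ) ∈ Icc 0 1 := ⟨zero_le_one, le_rfl⟩
  have hfg : ∀ i, Integrable (fun x => (f i x - g x) ^ 2) μ := fun i =>
    integrable_sub_sq_of_mem_Icc (hf i) hg (hf01 i) hg01
  have h1f : ∀ i, Integrable (fun x => (1 - f i x) ^ 2) μ := fun i =>
    integrable_sub_sq_of_mem_Icc measurable_const (hf i) (fun _ => hone) (hf01 i)
  have h1g : Integrable (fun x => (1 - g x) ^ 2) μ :=
    integrable_sub_sq_of_mem_Icc measurable_const hg (fun _ => hone) hg01
  calc _ = ∫ x : α, ∑ i ∈ s, p i * (f i x - g x) ^ 2 ∂μ := by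
        rw [integral_finsetSum s fun i _ => (hfg i).const_mul (p i)]
        simp_rw [integral_const_mul]
    _ = ∫ x : α, (∑ i ∈ s, p i * (1 - f i x) ^ 2 - (1 - g x) ^ 2) ∂μ := by
        simp_rw [s.sum_mul_sub_sq_of_sum_mul_eq hp (hpf _)]
    _ = _ := by
        rw [integral_sub (integrable_finsetSum s fun i _ => (h1f i).const_mul (p i)) h1g,
          integral_finsetSum s fun i _ => (h1f i).const_mul (p i)]
        simp_rw [integral_const_mul]

end MeasureTheory

namespace ProbabilityTheory

section Cdf

variable {μ : Measure ℝ} [IsProbabilityMeasure μ]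

theorem measure_preimage_cdf_Iic (hc : Continuous (cdf μ)) {t : ℝ} (ht₀ : 0 ≤ t) (ht₁ : t < 1) :
    μ (cdf μ ⁻¹' Iic t) = ENNReal.ofReal t := by
  set S := cdf μ ⁻¹' Iic t
  rcases S.eq_empty_or_nonempty with hS | hS
  · obtain rfl : t = 0 := by
      refine le_antisymm (not_lt.1 fun ht => ?_) ht₀
      obtain ⟨x, hx⟩ := ((tendsto_cdf_atBot μ).eventually_lt_const ht).exists
      exact hS.subset (show x ∈ S from hx.le)
    simp [hS]
  have hbdd : BddAbove S := by
    obtain ⟨b, hb⟩ := ((tendsto_cdf_atTop μ).eventually_const_lt ht₁).exists_forall_of_atTop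
    exact ⟨b, fun x hx => not_lt.1 fun hbx => (hb x hbx.le).not_ge hx⟩
  set a := sSup S
  have ha : cdf μ a ≤ t := (isClosed_Iic.preimage hc).csSup_mem hS hbdd
  have hSa : S = Iic a :=
    Subset.antisymm (fun x hx => le_csSup hbdd hx) fun x hx => (monotone_cdf μ hx).trans ha
  have hta : t ≤ cdf μ a := by
    by_contra! h
    have hnear : ∀ᶠ x in 𝓝[>] a, cdf μ x < t :=
      ((hc.tendsto a).eventually (gt_mem_nhds h)).filter_mono nhdsWithin_le_nhds
    obtain ⟨b, hb, hab⟩ := (hnear.and self_mem_nhdsWithin).exists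
    exact (le_csSup hbdd (show b ∈ S from hb.le)).not_gt hab
  rw [hSa, ← ofReal_cdf, le_antisymm ha hta]

theorem map_cdf_eq_restrict_Ioc (hc : Continuous (cdf μ)) :
    μ.map (cdf μ) = volume.restrict (Ioc 0 1) := by
  refine Measure.ext_of_Iic _ _ fun t => ?_
  rw [Measure.map_apply hc.measurable measurableSet_Iic, Measure.restrict_apply measurableSet_Iic]
  rcases lt_or_ge t 0 with ht₀ | ht₀
  · have h : cdf μ ⁻¹' Iic t = ∅ :=
      eq_empty_of_forall_notMem fun x hx => (ht₀.trans_le (cdf_nonneg μ x)).not_ge hx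
    rw [h, Iic_inter_Ioc_of_le (ht₀.le.trans zero_le_one), Ioc_eq_empty ht₀.not_gt]
    simp
  rcases lt_or_ge t 1 with ht₁ | ht₁
  · rw [measure_preimage_cdf_Iic hc ht₀ ht₁, Iic_inter_Ioc_of_le ht₁.le, Real.volume_Ioc, sub_zero]
  · have h : cdf μ ⁻¹' Iic t = univ := eq_univ_of_forall fun x => (cdf_le_one μ x).trans ht₁
    rw [h, inter_eq_right.2 fun x hx => hx.2.trans ht₁]
    simp

theorem integral_comp_cdf (hc : Continuous (cdf μ)) {g : ℝ → ℝ} (hg : Measurable g) :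
    ∫ x, g (cdf μ x) ∂μ = ∫ y in 0..1, g y := by
  rw [← integral_map hc.aemeasurable hg.aestronglyMeasurable, map_cdf_eq_restrict_Ioc hc,
    intervalIntegral.integral_of_le zero_le_one]

end Cdf

variable {Ω β ι : Type*} [MeasurableSpace Ω] [MeasurableSpace β] {P : Measure Ω}

theorem iIndepFun.measureReal_mem_and_mem_eq_integral_sq [IsProbabilityMeasure P]
    {ν : Measure β} {Z : Fin 3 → Ω → β} (hZ : ∀ i, Measurable (Z i)) (hindep : iIndepFun Z P)
    (hlaw : ∀ i, P.map (Z i) = ν) {S : β → Set β}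
    (hS : MeasurableSet {q : β × β | q.2 ∈ S q.1}) :
    P.real {ω | Z 0 ω ∈ S (Z 2 ω) ∧ Z 1 ω ∈ S (Z 2 ω)} = ∫ z, ν.real (S z) ^ 2 ∂ν := by
  have : IsProbabilityMeasure ν := hlaw 0 ▸ Measure.isProbabilityMeasure_map (hZ 0).aemeasurable
  have hZ01 : P.map (fun ω => (Z 0 ω, Z 1 ω)) = ν.prod ν := by
    simpa only [hlaw] using (hindep.indepFun (show (0 : Fin 3) ≠ 1 by decide))
      |>.map_prod_eq_prod_map_map (hZ 0).aemeasurable (hZ 1).aemeasurable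
  have hZ201 : P.map (fun ω => (Z 2 ω, Z 0 ω, Z 1 ω)) = ν.prod (ν.prod ν) := by
    simpa only [hlaw, hZ01] using (hindep.indepFun_prodMk hZ 0 1 2 (by decide) (by decide)).symm
      |>.map_prod_eq_prod_map_map (hZ 2).aemeasurable ((hZ 0).prodMk (hZ 1)).aemeasurable
  set B := {q : β × β × β | q.2.1 ∈ S q.1 ∧ q.2.2 ∈ S q.1}
  have hB : MeasurableSet B :=
    (hS.preimage (measurable_fst.prodMk measurable_snd.fst)).inter
      (hS.preimage (measurable_fst.prodMk measurable_snd.snd))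
  have hP : P {ω | Z 0 ω ∈ S (Z 2 ω) ∧ Z 1 ω ∈ S (Z 2 ω)} = ν.prod (ν.prod ν) B := by
    rw [← hZ201, Measure.map_apply ((hZ 2).prodMk ((hZ 0).prodMk (hZ 1))) hB]
    rfl
  rw [measureReal_def, hP, Measure.prod_apply hB,
    ← integral_toReal (measurable_measure_prodMk_left hB).aemeasurable
      (ae_of_all _ fun _ => measure_lt_top _ _)]
  congr with z
  rw [show Prod.mk z ⁻¹' B = S z ×ˢ S z from rfl, Measure.prod_prod, ENNReal.toReal_mul, sq]
  rfl

variable [MeasurableSpace ι] [MeasurableSingletonClass ι] {X : Ω → ℝ} {Y : Ω → ι}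

theorem sum_measureReal_inter_preimage_singleton [IsFiniteMeasure P] [Fintype ι]
    (hY : Measurable Y) (s : Set Ω) : ∑ k, P.real (s ∩ Y ⁻¹' {k}) = P.real s := by
  have := sum_measureReal_preimage_singleton (μ := P.restrict s) Finset.univ
    (fun k _ => hY (measurableSet_singleton k))
  simpa [measureReal_restrict_apply (hY (measurableSet_singleton _)), inter_comm] using this

theorem measureReal_lt_and_eq [IsFiniteMeasure P] (hX : Measurable X) (hY : Measurable Y)
    (x : ℝ) (k : ι) :
    P.real {ω | x < X ω ∧ Y ω = k} = P.real {ω | Y ω = k} - P.real {ω | X ω ≤ x ∧ Y ω = k} := by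
  have hdiff : {ω | x < X ω ∧ Y ω = k} = {ω | Y ω = k} \ {ω | X ω ≤ x ∧ Y ω = k} := by
    ext ω; simp only [Set.mem_sdiff, mem_ofPred_eq]; grind
  have hmeas : MeasurableSet {ω | X ω ≤ x ∧ Y ω = k} :=
    (hX measurableSet_Iic).inter (hY (measurableSet_singleton k))
  rw [hdiff]
  exact measureReal_sdiff (fun ω (h : X ω ≤ x ∧ Y ω = k) => h.2) hmeas

theorem cdf_map_cond_preimage_singleton [IsFiniteMeasure P] (hX : Measurable X)
    (hY : Measurable Y) {k : ι} (hk : P {ω | Y ω = k} ≠ 0) (x : ℝ) :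
    cdf ((P[|Y ⁻¹' {k}]).map X) x = P.real {ω | X ω ≤ x ∧ Y ω = k} / P.real {ω | Y ω = k} := by
  have : IsProbabilityMeasure P[|Y ⁻¹' {k}] := cond_isProbabilityMeasure hk
  have : IsProbabilityMeasure ((P[|Y ⁻¹' {k}]).map X) :=
    Measure.isProbabilityMeasure_map hX.aemeasurable
  rw [cdf_eq_real, map_measureReal_apply hX measurableSet_Iic, measureReal_def,
    cond_apply (hY (measurableSet_singleton k)), ENNReal.toReal_mul, ENNReal.toReal_inv,
    div_eq_inv_mul, inter_comm]
  rfl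

theorem measureReal_min_fst_gt_of_iid [IsProbabilityMeasure P] (hX : Measurable X)
    (hY : Measurable Y) {Z : Fin 3 → Ω → ℝ × ι} (hZ : ∀ i, Measurable (Z i))
    (hindep : iIndepFun Z P) (hident : ∀ i, IdentDistrib (Z i) (fun ω => (X ω, Y ω)) P P)
    (k : ι) :
    P.real {ω | min (Z 0 ω).1 (Z 1 ω).1 > (Z 2 ω).1 ∧ (Z 0 ω).2 = k ∧ (Z 1 ω).2 = k}
      = ∫ x, P.real {ω | x < X ω ∧ Y ω = k} ^ 2 ∂(P.map X) := by
  set S : ℝ × ι → Set (ℝ × ι) := fun z => {r | z.1 < r.1 ∧ r.2 = k}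
  have hS : MeasurableSet {q : (ℝ × ι) × (ℝ × ι) | q.2 ∈ S q.1} :=
    (measurableSet_lt measurable_fst.fst measurable_snd.fst).inter
      (measurable_snd.snd (measurableSet_singleton k))
  set g : ℝ → ℝ := fun x => P.real {ω | x < X ω ∧ Y ω = k} ^ 2
  have hg : Measurable g :=
    (Antitone.measurable fun a b hab => measureReal_mono fun ω (h : b < X ω ∧ Y ω = k) =>
      ⟨hab.trans_lt h.1, h.2⟩).pow_const 2
  have hXY : Measurable fun ω => (X ω, Y ω) := hX.prodMk hY
  have hSg : ∀ z, (P.map fun ω => (X ω, Y ω)).real (S z) ^ 2 = g z.1 := fun z => by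
    rw [map_measureReal_apply hXY (show MeasurableSet (S z) from hS.preimage measurable_prodMk_left)]
    rfl
  calc _ = P.real {ω | Z 0 ω ∈ S (Z 2 ω) ∧ Z 1 ω ∈ S (Z 2 ω)} := by
        congr 1; ext ω; simp only [S, mem_ofPred_eq, gt_iff_lt, lt_min_iff]; tauto
    _ = ∫ z, g z.1 ∂(P.map fun ω => (X ω, Y ω)) := by
        simp_rw [← hSg]
        exact hindep.measureReal_mem_and_mem_eq_integral_sq hZ (fun i => (hident i).map_eq) hS
    _ = ∫ x, g x ∂(P.map X) := by
        rw [integral_map (f := fun z => g z.1) hXY.aemeasurable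
            (hg.comp measurable_fst).aestronglyMeasurable,
          integral_map hX.aemeasurable hg.aestronglyMeasurable]

end ProbabilityTheory

/-- Δ = Σ_k (1/p_k) P(min(X1,X2) > X3, Y1 = Y2 = k) − 1/3 for i.i.d. copies of (X,Y). -/
theorem stmt_6 {Ω : Type*} [MeasurableSpace Ω] (P : Measure Ω) [IsProbabilityMeasure P]
    {K : ℕ} (X : Ω → ℝ) (Y : Ω → Fin K) (hX : Measurable X) (hY : Measurable Y)
    (F : ℝ → ℝ) (hF : ∀ x, F x = (P {ω | X ω ≤ x}).toReal) (hFc : Continuous F)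
    (p : Fin K → ℝ) (hp : ∀ k, p k = (P {ω | Y ω = k}).toReal) (hppos : ∀ k, 0 < p k)
    (Fk : Fin K → ℝ → ℝ)
    (hFk : ∀ k x, Fk k x = (P {ω | X ω ≤ x ∧ Y ω = k}).toReal / p k)
    (Z : Fin 3 → Ω → ℝ × Fin K) (hZ : ∀ i, Measurable (Z i))
    (hindep : iIndepFun Z P)
    (hident : ∀ i, IdentDistrib (Z i) (fun ω => (X ω, Y ω)) P P) :
    ∑ k, p k * ∫ x, (Fk k x - F x) ^ 2 ∂(Measure.map X P)
      = ∑ k, (1 / p k) *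
          (P {ω | min (Z 0 ω).1 (Z 1 ω).1 > (Z 2 ω).1 ∧ (Z 0 ω).2 = k ∧ (Z 1 ω).2 = k}).toReal
        - 1 / 3 := by
  have hp_real : ∀ k, p k = P.real {ω | Y ω = k} := hp
  have : IsProbabilityMeasure (P.map X) := Measure.isProbabilityMeasure_map hX.aemeasurable
  have hF_cdf : F = cdf (P.map X) := funext fun x => by
    rw [hF, cdf_eq_real, map_measureReal_apply hX measurableSet_Iic]
    rfl
  have hFk_cdf : ∀ k, Fk k = cdf ((P[|Y ⁻¹' {k}]).map X) := fun k => funext fun x => by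
    have hk : P {ω | Y ω = k} ≠ 0 := fun h => (hppos k).ne' (by rw [hp, h, ENNReal.toReal_zero])
    rw [hFk, cdf_map_cond_preimage_singleton hX hY hk, ← hp_real]
    rfl
  have hpFk : ∀ k x, p k * Fk k x = P.real {ω | X ω ≤ x ∧ Y ω = k} := fun k x => by
    rw [hFk, mul_div_cancel₀ _ (hppos k).ne', measureReal_def]
  have hp_sum : ∑ k, p k = 1 := by
    have h := sum_measureReal_inter_preimage_singleton (P := P) hY univ
    simp only [univ_inter, probReal_univ] at h
    simp_rw [hp_real]
    exact h
  have hF_sum : ∀ x, ∑ k, p k * Fk k x = F x := fun x => by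
    simp_rw [hpFk, hF, ← measureReal_def]
    exact sum_measureReal_inter_preimage_singleton hY {ω | X ω ≤ x}
  have hpair : ∀ k, 1 / p k * (P {ω | min (Z 0 ω).1 (Z 1 ω).1 > (Z 2 ω).1 ∧ (Z 0 ω).2 = k
      ∧ (Z 1 ω).2 = k}).toReal = p k * ∫ x, (1 - Fk k x) ^ 2 ∂(P.map X) := fun k => by
    simp_rw [← measureReal_def, measureReal_min_fst_gt_of_iid hX hY hZ hindep hident,
      measureReal_lt_and_eq hX hY, ← hp_real, ← hpFk, ← mul_one_sub, mul_pow, integral_const_mul]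
    field_simp
  rw [sum_mul_integral_sub_sq_of_sum_mul_eq Finset.univ hp_sum hF_sum
    (fun k => hFk_cdf k ▸ (monotone_cdf _).measurable) hFc.measurable
    (fun k x => hFk_cdf k ▸ ⟨cdf_nonneg _ x, cdf_le_one _ x⟩)
    (fun x => hF_cdf ▸ ⟨cdf_nonneg _ x, cdf_le_one _ x⟩),
    Finset.sum_congr rfl fun k _ => hpair k, hF_cdf,
    integral_comp_cdf (g := fun y => (1 - y) ^ 2) (hF_cdf ▸ hFc) (by fun_prop),
    integral_one_sub_sq_zero_to_one]
end

section
/- Under independence of X (continuous) and Y (categorical, P(Y = k) = p_k), for i.i.d. copies (Xi, Yi): Cov( I(min(X1,X2) > X3, Y1 = Y2 = k), I(min(X4,X5) > X1, Y4 = Y5 = k) ) = −(2/45) p_k⁴. -/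
/-!
Write `Zᵢ = (Xᵢ, Yᵢ)`, `ν` and `ρ` for the laws of `X` and `Y`, and `G t = ν (t, ∞) = 1 - F t`.
By independence the law of `(Z₀, …, Z₄)` is `(ν ⊗ ρ)^⊗5`, which after regrouping coordinates is
`ν^⊗5 ⊗ ρ^⊗5`. Each of the events is an order event for the `Xᵢ` intersected with the event that
the relevant `Yᵢ` equal `k`, so its probability is that of the order event times `p_k²`
(or `p_k⁴` for the intersection).

Order events are computed by integrating out one coordinate at a time. As `F` is continuous,
`F(X)` is uniform on `(0, 1]`, hence `∫ G^n dν = 1/(n+1)` and `∫_{x > t} G^n dν = G(t)^(n+1)/(n+1)`.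
Thus `P(X₂ < X₀, X₂ < X₁) = ∫ G² dν = 1/3`, and integrating out `X₄, X₃, X₁`, then `X₀`, then `X₂`,
`P(X₂ < X₀, X₂ < X₁, X₀ < X₃, X₀ < X₄) = ∫ G(a) · G(a)³/3 dν(a) = 1/15`.
The covariance is therefore `p_k⁴/15 - (p_k²/3)² = -(2/45) p_k⁴`.
-/

open MeasureTheory ProbabilityTheory Set Function
open scoped ENNReal

theorem lintegral_Ioc_one_sub_pow {a : ℝ} (ha : a ≤ 1) (n : ℕ) :
    ∫⁻ s in Ioc a 1, ENNReal.ofReal ((1 - s) ^ n)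
      = ENNReal.ofReal ((1 - a) ^ (n + 1) / (n + 1)) := by
  have hnonneg : ∀ s ∈ Ioc a 1, 0 ≤ (1 - s) ^ n := fun s hs => pow_nonneg (sub_nonneg.2 hs.2) n
  rw [← ofReal_integral_eq_lintegral_ofReal
      (by fun_prop : Continuous fun s : ℝ => (1 - s) ^ n).integrableOn_Ioc
      ((ae_restrict_iff' measurableSet_Ioc).2 (ae_of_all _ hnonneg)),
    ← intervalIntegral.integral_of_le ha,
    intervalIntegral.integral_comp_sub_left (fun s => s ^ n), integral_pow]
  simp

namespace MeasureTheory

variable {δ : Type*} [DecidableEq δ] {X : δ → Type*} [∀ i, MeasurableSpace (X i)]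
  {μ : ∀ i, Measure (X i)} {f : (∀ i, X i) → ℝ≥0∞} {i : δ} {x : ∀ i, X i} {c : ℝ≥0∞}
  {g : X i → ℝ≥0∞}

theorem lmarginal_singleton_apply_eq_const_mul (hg : Measurable g)
    (h : ∀ y, f (update x i y) = c * g y) : (∫⋯∫⁻_{i}, f ∂μ) x = c * ∫⁻ y, g y ∂μ i := by
  simp_rw [lmarginal_singleton, h]
  exact lintegral_const_mul c hg

theorem lmarginal_insert_apply_eq_const_mul [∀ i, SigmaFinite (μ i)] (hf : Measurable f)
    {s : Finset δ} (hi : i ∉ s) (hg : Measurable g)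
    (h : ∀ y, (∫⋯∫⁻_s, f ∂μ) (update x i y) = c * g y) :
    (∫⋯∫⁻_insert i s, f ∂μ) x = c * ∫⁻ y, g y ∂μ i := by
  simp_rw [lmarginal_insert f hf hi, h]
  exact lintegral_const_mul c hg

theorem lintegral_eq_of_lmarginal_eq_const [Fintype δ] [∀ i, IsProbabilityMeasure (μ i)]
    (hf : Measurable f) (s : Finset δ) (h : ∀ x, (∫⋯∫⁻_s, f ∂μ) x = c) :
    ∫⁻ x, f x ∂Measure.pi μ = c := by
  rw [lintegral_eq_of_lmarginal_eq s hf measurable_const (g := fun _ => c)]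
  · simp
  · ext x
    rw [h]
    simp [lmarginal]

end MeasureTheory

namespace ProbabilityTheory

variable {ν : Measure ℝ}

theorem measurable_measure_Ioi : Measurable fun t => ν (Ioi t) :=
  Antitone.measurable fun _ _ h => measure_mono (Ioi_subset_Ioi h)

theorem exists_cdf_eq (hF : Continuous (cdf ν)) {a : ℝ} (ha : a ∈ Ioo 0 1) : ∃ b, cdf ν b = a := by
  obtain ⟨x, hx⟩ := ((tendsto_cdf_atBot ν).eventually (gt_mem_nhds ha.1)).exists
  obtain ⟨y, hy⟩ := ((tendsto_cdf_atTop ν).eventually (lt_mem_nhds ha.2)).exists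
  exact intermediate_value_univ x y hF ⟨hx.le, hy.le⟩

variable [IsProbabilityMeasure ν]

theorem measure_cdf_preimage_Iic_le (hF : Continuous (cdf ν)) (a : ℝ) :
    ν (cdf ν ⁻¹' Iic a) ≤ ENNReal.ofReal a := by
  refine le_of_forall_gt_imp_ge_of_dense fun c hc => ?_
  rcases lt_or_ge c 1 with hc1 | hc1
  · have hc0 : 0 < c.toReal := ENNReal.toReal_pos (pos_of_gt hc).ne' hc1.ne_top
    obtain ⟨b, hb⟩ := exists_cdf_eq hF ⟨hc0, ENNReal.toReal_lt_of_lt_ofReal (by simpa using hc1)⟩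
    calc ν (cdf ν ⁻¹' Iic a) ≤ ν (Iic b) := measure_mono fun x (hx : cdf ν x ≤ a) => show x ≤ b by
          by_contra! hbx
          refine hc.not_ge ?_
          rw [← ENNReal.ofReal_toReal hc1.ne_top, ← hb]
          exact ENNReal.ofReal_le_ofReal ((monotone_cdf ν hbx.le).trans hx)
      _ = c := by rw [← ofReal_cdf, hb, ENNReal.ofReal_toReal hc1.ne_top]
  · exact prob_le_one.trans hc1

theorem measure_cdf_preimage_Iic (hF : Continuous (cdf ν)) (a : ℝ) :
    ν (cdf ν ⁻¹' Iic a) = ENNReal.ofReal (min 1 a) := by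
  rcases le_or_gt 1 a with ha1 | ha1
  · rw [min_eq_left ha1, ENNReal.ofReal_one, ← measure_univ (μ := ν)]
    congr
    exact eq_univ_of_forall fun x => (cdf_le_one ν x).trans ha1
  rw [min_eq_right ha1.le]
  refine le_antisymm (measure_cdf_preimage_Iic_le hF a) ?_
  rcases le_or_gt a 0 with ha0 | ha0
  · simp [ENNReal.ofReal_eq_zero.2 ha0]
  obtain ⟨b, hb⟩ := exists_cdf_eq hF ⟨ha0, ha1⟩
  calc ENNReal.ofReal a = ν (Iic b) := by rw [← ofReal_cdf, hb]
    _ ≤ ν (cdf ν ⁻¹' Iic a) := measure_mono fun x (hx : x ≤ b) => (monotone_cdf ν hx).trans hb.le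

theorem map_cdf_eq_restrict_Ioc_s12 (hF : Continuous (cdf ν)) :
    ν.map (cdf ν) = volume.restrict (Ioc 0 1) := by
  refine Measure.ext_of_Iic _ _ fun a => ?_
  rw [Measure.map_apply hF.measurable measurableSet_Iic, measure_cdf_preimage_Iic hF,
    Measure.restrict_apply measurableSet_Iic, inter_comm, Ioc_inter_Iic, Real.volume_Ioc, sub_zero]

theorem measure_Ioi_eq_ofReal_one_sub_cdf (t : ℝ) : ν (Ioi t) = ENNReal.ofReal (1 - cdf ν t) := by
  rw [← compl_Iic, prob_compl_eq_one_sub measurableSet_Iic, ← ofReal_cdf,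
    ENNReal.ofReal_sub _ (cdf_nonneg ν t), ENNReal.ofReal_one]

theorem Ioi_ae_eq_cdf_preimage (hF : Continuous (cdf ν)) (t : ℝ) :
    Ioi t =ᵐ[ν] cdf ν ⁻¹' Ioi (cdf ν t) := by
  have hnull : ν (cdf ν ⁻¹' {cdf ν t}) = 0 := by
    rw [← Measure.map_apply hF.measurable (measurableSet_singleton _), map_cdf_eq_restrict_Ioc_s12 hF,
      Measure.restrict_apply (measurableSet_singleton _)]
    exact measure_mono_null inter_subset_left Real.volume_singleton
  filter_upwards [measure_eq_zero_iff_ae_notMem.1 hnull] with x hx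
  simp only [mem_preimage, mem_singleton_iff] at hx
  exact propext ⟨fun h => lt_of_le_of_ne (monotone_cdf ν (le_of_lt h)) (Ne.symm hx),
    fun h => (monotone_cdf ν).reflect_lt h⟩

theorem measure_Ioi_pow_eq_ofReal (t : ℝ) (n : ℕ) :
    ν (Ioi t) ^ n = ENNReal.ofReal ((1 - cdf ν t) ^ n) := by
  rw [measure_Ioi_eq_ofReal_one_sub_cdf, ENNReal.ofReal_pow (sub_nonneg.2 (cdf_le_one ν t))]

theorem setLIntegral_Ioi_measure_Ioi_pow (hF : Continuous (cdf ν)) (t : ℝ) (n : ℕ) :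
    ∫⁻ x in Ioi t, ν (Ioi x) ^ n ∂ν = ν (Ioi t) ^ (n + 1) / (n + 1) := by
  have hg : Measurable fun s : ℝ => ENNReal.ofReal ((1 - s) ^ n) := by fun_prop
  simp_rw [measure_Ioi_pow_eq_ofReal]
  rw [setLIntegral_congr (Ioi_ae_eq_cdf_preimage hF t),
    ← setLIntegral_map measurableSet_Ioi hg hF.measurable, map_cdf_eq_restrict_Ioc_s12 hF,
    Measure.restrict_restrict measurableSet_Ioi, inter_comm, Ioc_inter_Ioi,
    sup_eq_right.2 (cdf_nonneg ν t), lintegral_Ioc_one_sub_pow (cdf_le_one ν t),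
    ENNReal.ofReal_div_of_pos (by positivity)]
  norm_cast

theorem lintegral_measure_Ioi_pow (hF : Continuous (cdf ν)) (n : ℕ) :
    ∫⁻ x, ν (Ioi x) ^ n ∂ν = 1 / (n + 1) := by
  have hg : Measurable fun s : ℝ => ENNReal.ofReal ((1 - s) ^ n) := by fun_prop
  simp_rw [measure_Ioi_pow_eq_ofReal]
  rw [← lintegral_map hg hF.measurable, map_cdf_eq_restrict_Ioc_s12 hF,
    lintegral_Ioc_one_sub_pow zero_le_one, ENNReal.ofReal_div_of_pos (by positivity)]
  norm_cast
  simp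

variable {δ : Type*} [Fintype δ] [DecidableEq δ]

theorem pi_setOf_lt_and_lt (hF : Continuous (cdf ν)) {i j l : δ} (hn : [i, j, l].Nodup) :
    Measure.pi (fun _ => ν) {x | x i < x j ∧ x i < x l} = 3⁻¹ := by
  simp only [List.nodup_cons, List.mem_cons, List.not_mem_nil, or_false, not_or] at hn
  obtain ⟨⟨hij, hil⟩, hjl, -⟩ := hn
  set S := {x : δ → ℝ | x i < x j ∧ x i < x l}
  have hS : MeasurableSet S := by measurability
  set f : (δ → ℝ) → ℝ≥0∞ := S.indicator 1
  have hf : Measurable f := measurable_one.indicator hS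
  have hj (x : δ → ℝ) : (∫⋯∫⁻_{j}, f ∂fun _ => ν) x
      = (Ioi (x i)).indicator 1 (x l) * ν (Ioi (x i)) := by
    rw [lmarginal_singleton_apply_eq_const_mul (measurable_one.indicator measurableSet_Ioi),
      lintegral_indicator_one measurableSet_Ioi]
    intro y
    simp [f, S, indicator_apply, update_of_ne hij, update_of_ne (Ne.symm hjl), ite_and]
  have hl (x : δ → ℝ) : (∫⋯∫⁻_insert l {j}, f ∂fun _ => ν) x
      = ν (Ioi (x i)) * ν (Ioi (x i)) := by
    rw [lmarginal_insert_apply_eq_const_mul hf (by simpa using Ne.symm hjl)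
      (measurable_one.indicator measurableSet_Ioi), lintegral_indicator_one measurableSet_Ioi]
    intro y
    rw [hj, update_self, update_of_ne hil, mul_comm]
  rw [← lintegral_indicator_one hS]
  refine lintegral_eq_of_lmarginal_eq_const hf (insert i (insert l {j})) fun x => ?_
  rw [lmarginal_insert_apply_eq_const_mul hf (by simp [hil, hij])
    (measurable_measure_Ioi.pow_const 2) (fun y => by rw [hl, update_self, one_mul, sq]),
    one_mul, lintegral_measure_Ioi_pow hF]
  norm_num

theorem pi_setOf_lt_and_lt_and_lt_and_lt (hF : Continuous (cdf ν)) {a b c d e : δ}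
    (hn : [a, b, c, d, e].Nodup) :
    Measure.pi (fun _ => ν) {x | x a < x b ∧ x a < x c ∧ x b < x d ∧ x b < x e} = 15⁻¹ := by
  simp only [List.nodup_cons, List.mem_cons, List.not_mem_nil, or_false, not_or] at hn
  obtain ⟨⟨hab, hac, had, hae⟩, ⟨hbc, hbd, hbe⟩, ⟨hcd, hce⟩, hde, -⟩ := hn
  set S := {x : δ → ℝ | x a < x b ∧ x a < x c ∧ x b < x d ∧ x b < x e}
  have hS : MeasurableSet S := by measurability
  set f : (δ → ℝ) → ℝ≥0∞ := S.indicator 1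
  have hf : Measurable f := measurable_one.indicator hS
  have he (x : δ → ℝ) : (∫⋯∫⁻_{e}, f ∂fun _ => ν) x
      = {x : δ → ℝ | x a < x b ∧ x a < x c ∧ x b < x d}.indicator 1 x * ν (Ioi (x b)) := by
    rw [lmarginal_singleton_apply_eq_const_mul (measurable_one.indicator measurableSet_Ioi),
      lintegral_indicator_one measurableSet_Ioi]
    intro y
    simp [f, S, indicator_apply, update_of_ne, hae, hbe, hce, hde]
    split_ifs <;> simp_all
  have hd (x : δ → ℝ) : (∫⋯∫⁻_insert d {e}, f ∂fun _ => ν) x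
      = {x : δ → ℝ | x a < x b ∧ x a < x c}.indicator 1 x * ν (Ioi (x b)) * ν (Ioi (x b)) := by
    rw [lmarginal_insert_apply_eq_const_mul hf (by simpa using hde)
      (measurable_one.indicator measurableSet_Ioi), lintegral_indicator_one measurableSet_Ioi]
    intro y
    simp [he, indicator_apply, update_of_ne, had, hbd, hcd]
    split_ifs <;> simp_all
  have hc (x : δ → ℝ) : (∫⋯∫⁻_insert c (insert d {e}), f ∂fun _ => ν) x
      = (Ioi (x a)).indicator 1 (x b) * ν (Ioi (x b)) * ν (Ioi (x b)) * ν (Ioi (x a)) := by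
    rw [lmarginal_insert_apply_eq_const_mul hf (by simp [hcd, hce])
      (measurable_one.indicator measurableSet_Ioi), lintegral_indicator_one measurableSet_Ioi]
    intro y
    simp [hd, indicator_apply, update_of_ne, hac, hbc]
    split_ifs <;> simp_all
  have hb (x : δ → ℝ) : (∫⋯∫⁻_insert b (insert c (insert d {e})), f ∂fun _ => ν) x
      = 3⁻¹ * ν (Ioi (x a)) ^ 4 := by
    rw [lmarginal_insert_apply_eq_const_mul (c := ν (Ioi (x a)))
      (g := (Ioi (x a)).indicator fun y => ν (Ioi y) ^ 2) hf (by simp [hbc, hbd, hbe])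
      ((measurable_measure_Ioi.pow_const 2).indicator measurableSet_Ioi),
      lintegral_indicator measurableSet_Ioi, setLIntegral_Ioi_measure_Ioi_pow hF]
    · rw [ENNReal.div_eq_inv_mul]
      norm_num
      ring
    intro y
    simp [hc, indicator_apply, update_of_ne, hab]
    split_ifs <;> simp [sq, mul_comm]
  rw [← lintegral_indicator_one hS]
  refine lintegral_eq_of_lmarginal_eq_const hf (insert a (insert b (insert c (insert d {e}))))
    fun x => ?_
  rw [lmarginal_insert_apply_eq_const_mul hf (by simp [hab, hac, had, hae])
    (measurable_measure_Ioi.pow_const 4) (fun y => by rw [hb, update_self]),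
    lintegral_measure_Ioi_pow hF]
  norm_num
  rw [← ENNReal.mul_inv (by simp) (by simp)]
  norm_num

end ProbabilityTheory

theorem MeasureTheory.Measure.pi_setOf_forall_mem_eq_pow {ι α : Type*} [Fintype ι]
    [MeasurableSpace α] (ρ : Measure α) [IsProbabilityMeasure ρ] (s : Finset ι) (t : Set α) :
    Measure.pi (fun _ : ι => ρ) {y | ∀ i ∈ s, y i ∈ t} = ρ t ^ s.card := by
  classical
  have : {y : ι → α | ∀ i ∈ s, y i ∈ t} = univ.pi fun i => if i ∈ s then t else univ := by
    ext y
    refine forall_congr' fun i => ?_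
    by_cases hi : i ∈ s <;> simp [hi]
  rw [this, Measure.pi_pi]
  simp [apply_ite, Finset.prod_ite_mem]

namespace ProbabilityTheory

variable {Ω α β : Type*} [MeasurableSpace Ω] [MeasurableSpace α] [MeasurableSpace β]
  {P : Measure Ω}

theorem iIndepFun.map_fst_snd_eq_prod_pi {ι : Type*} [Fintype ι] {Z : ι → Ω → α × β}
    (hZ : ∀ i, Measurable (Z i)) (hind : iIndepFun Z P) {ν : Measure α} {ρ : Measure β}
    [IsProbabilityMeasure ν] [IsProbabilityMeasure ρ] (hlaw : ∀ i, P.map (Z i) = ν.prod ρ) :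
    P.map (fun ω => (fun i => (Z i ω).1, fun i => (Z i ω).2))
      = (Measure.pi fun _ => ν).prod (Measure.pi fun _ => ρ) := by
  have : (fun ω => (fun i => (Z i ω).1, fun i => (Z i ω).2))
      = MeasurableEquiv.arrowProdEquivProdArrow α β ι ∘ fun ω i => Z i ω := rfl
  rw [this, ← Measure.map_map (MeasurableEquiv.measurable _) (measurable_pi_lambda _ hZ),
    hind.map_fun_eq_pi_map fun i => (hZ i).aemeasurable]
  simp_rw [hlaw]
  exact (measurePreserving_arrowProdEquivProdArrow α β ι _ _).map_eq

theorem integral_ite_eq_of_map_eq_prod {V : Ω → α × β} (hV : Measurable V) {μ₁ : Measure α}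
    {μ₂ : Measure β} [SFinite μ₂] (hlaw : P.map V = μ₁.prod μ₂) {S : Set α} {T : Set β}
    (hS : MeasurableSet S) (hT : MeasurableSet T) {p : Ω → Prop} [DecidablePred p]
    (hp : ∀ ω, p ω ↔ (V ω).1 ∈ S ∧ (V ω).2 ∈ T) :
    ∫ ω, (if p ω then (1 : ℝ) else 0) ∂P = (μ₁ S * μ₂ T).toReal := by
  have : (fun ω => if p ω then (1 : ℝ) else 0) = (V ⁻¹' S ×ˢ T).indicator 1 := by
    classical
    ext ω
    simp [indicator_apply, hp]
  rw [this, integral_indicator_one (hV (hS.prod hT)), ← map_measureReal_apply hV (hS.prod hT),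
    hlaw, measureReal_def, Measure.prod_prod]

end ProbabilityTheory

theorem stmt_12_general {Ω : Type*} [MeasurableSpace Ω] (P : Measure Ω) [IsProbabilityMeasure P]
    {K : ℕ} (X : Ω → ℝ) (Y : Ω → Fin K) (hX : Measurable X) (hY : Measurable Y)
    (F : ℝ → ℝ) (hF : ∀ x, F x = (P {ω | X ω ≤ x}).toReal) (hFc : Continuous F)
    (p : Fin K → ℝ) (hp : ∀ k, p k = (P {ω | Y ω = k}).toReal)
    (hindXY : IndepFun X Y P)
    (Z : Fin 5 → Ω → ℝ × Fin K) (hZ : ∀ i, Measurable (Z i))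
    (hindep : iIndepFun Z P)
    (hident : ∀ i, IdentDistrib (Z i) (fun ω => (X ω, Y ω)) P P) (k : Fin K) :
    (∫ ω, (if min (Z 0 ω).1 (Z 1 ω).1 > (Z 2 ω).1 ∧ (Z 0 ω).2 = k ∧ (Z 1 ω).2 = k then (1:ℝ) else 0) * (if min (Z 3 ω).1 (Z 4 ω).1 > (Z 0 ω).1 ∧ (Z 3 ω).2 = k ∧ (Z 4 ω).2 = k then (1:ℝ) else 0) ∂P)
      - (∫ ω, (if min (Z 0 ω).1 (Z 1 ω).1 > (Z 2 ω).1 ∧ (Z 0 ω).2 = k ∧ (Z 1 ω).2 = k then (1:ℝ) else 0) ∂P) * (∫ ω, (if min (Z 3 ω).1 (Z 4 ω).1 > (Z 0 ω).1 ∧ (Z 3 ω).2 = k ∧ (Z 4 ω).2 = k then (1:ℝ) else 0) ∂P) = -(2 / 45) * p k ^ 4 := by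
  have : IsProbabilityMeasure (P.map X) := Measure.isProbabilityMeasure_map hX.aemeasurable
  have : IsProbabilityMeasure (P.map Y) := Measure.isProbabilityMeasure_map hY.aemeasurable
  have hFX : Continuous (cdf (P.map X)) := by
    convert hFc using 1
    ext x
    rw [hF, cdf_eq_real, map_measureReal_apply hX measurableSet_Iic]
    rfl
  have hpk : (P.map Y {k}).toReal = p k := by
    rw [hp, Measure.map_apply hY (measurableSet_singleton k)]
    rfl
  have hlaw := hindep.map_fst_snd_eq_prod_pi hZ fun i => (hident i).map_eq.trans
    ((indepFun_iff_map_prod_eq_prod_map_map hX.aemeasurable hY.aemeasurable).1 hindXY)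
  have hV : Measurable fun ω => (fun i => (Z i ω).1, fun i => (Z i ω).2) := by fun_prop
  simp_rw [ite_zero_mul_ite_zero, one_mul]
  rw [integral_ite_eq_of_map_eq_prod hV hlaw
      (S := {x | x 2 < x 0 ∧ x 2 < x 1 ∧ x 0 < x 3 ∧ x 0 < x 4})
      (T := {y | ∀ i ∈ ({0, 1, 3, 4} : Finset (Fin 5)), y i ∈ ({k} : Set (Fin K))})
      (by measurability) .of_discrete fun ω => by simp; tauto,
    integral_ite_eq_of_map_eq_prod hV hlaw (S := {x | x 2 < x 0 ∧ x 2 < x 1})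
      (T := {y | ∀ i ∈ ({0, 1} : Finset (Fin 5)), y i ∈ ({k} : Set (Fin K))})
      (by measurability) .of_discrete fun ω => by simp,
    integral_ite_eq_of_map_eq_prod hV hlaw (S := {x | x 0 < x 3 ∧ x 0 < x 4})
      (T := {y | ∀ i ∈ ({3, 4} : Finset (Fin 5)), y i ∈ ({k} : Set (Fin K))})
      (by measurability) .of_discrete fun ω => by simp,
    pi_setOf_lt_and_lt_and_lt_and_lt hFX (by decide), pi_setOf_lt_and_lt hFX (by decide),
    pi_setOf_lt_and_lt hFX (by decide)]
  simp only [Measure.pi_setOf_forall_mem_eq_pow]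
  simp [hpk]
  ring

/-- Cov(I(min(X1,X2)>X3, Y1=Y2=k), I(min(X4,X5)>X1, Y4=Y5=k)) = −(2/45) p_k⁴. -/
theorem stmt_12 {Ω : Type*} [MeasurableSpace Ω] (P : Measure Ω) [IsProbabilityMeasure P]
    {K : ℕ} (X : Ω → ℝ) (Y : Ω → Fin K) (hX : Measurable X) (hY : Measurable Y)
    (F : ℝ → ℝ) (hF : ∀ x, F x = (P {ω | X ω ≤ x}).toReal) (hFc : Continuous F)
    (p : Fin K → ℝ) (hp : ∀ k, p k = (P {ω | Y ω = k}).toReal) (hppos : ∀ k, 0 < p k)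
    (hindXY : IndepFun X Y P)
    (Z : Fin 5 → Ω → ℝ × Fin K) (hZ : ∀ i, Measurable (Z i))
    (hindep : iIndepFun Z P)
    (hident : ∀ i, IdentDistrib (Z i) (fun ω => (X ω, Y ω)) P P) (k : Fin K) :
    (∫ ω, (if min (Z 0 ω).1 (Z 1 ω).1 > (Z 2 ω).1 ∧ (Z 0 ω).2 = k ∧ (Z 1 ω).2 = k then (1:ℝ) else 0) * (if min (Z 3 ω).1 (Z 4 ω).1 > (Z 0 ω).1 ∧ (Z 3 ω).2 = k ∧ (Z 4 ω).2 = k then (1:ℝ) else 0) ∂P)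
      - (∫ ω, (if min (Z 0 ω).1 (Z 1 ω).1 > (Z 2 ω).1 ∧ (Z 0 ω).2 = k ∧ (Z 1 ω).2 = k then (1:ℝ) else 0) ∂P) * (∫ ω, (if min (Z 3 ω).1 (Z 4 ω).1 > (Z 0 ω).1 ∧ (Z 3 ω).2 = k ∧ (Z 4 ω).2 = k then (1:ℝ) else 0) ∂P) = -(2 / 45) * p k ^ 4 :=
  stmt_12_general P X Y hX hY F hF hFc p hp hindXY Z hZ hindep hident k
end

section
/- Under independence of X (continuous) and Y (categorical, P(Y = k) = p_k), for i.i.d. copies (Xi, Yi): Cov( I(min(X2,X3) > X1, Y2 = Y3 = k), I(min(X4,X5) > X1, Y4 = Y5 = k) ) = (4/45) p_k⁴. -/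
/-!
Write `h z w = 1{z.1 < w.1, w.2 = k}`. The two indicators are `h(Z₀, Z₁) h(Z₀, Z₂)` and
`h(Z₀, Z₃) h(Z₀, Z₄)`, so every expectation in the covariance is `E ∏_{i ∈ s} h(Z₀, Zᵢ)` for some
set `s` of indices. Integrating out the `Zᵢ` first (they are i.i.d. with law `ν` and independent of
`Z₀`) gives `∫ (∫ h(z, ·) dν)^|s| dν(z)`. Independence of `X` and `Y` gives
`∫ h(z, ·) dν = p_k (1 - F z.1)`, and continuity of `F` makes `F(X)` uniform on `(0, 1]`, so the
moment is `p_k^|s| / (|s| + 1)`. The covariance is therefore `p_k⁴/5 - (p_k²/3)² = 4 p_k⁴/45`.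
-/

open MeasureTheory ProbabilityTheory Set Filter

section cdf

variable {μ : Measure ℝ} [IsProbabilityMeasure μ]

lemma measure_cdf_le_of_continuous (hc : Continuous (cdf μ)) {s : ℝ} (hs0 : 0 ≤ s) (hs1 : s < 1) :
    μ {x | cdf μ x ≤ s} = ENNReal.ofReal s := by
  set A := {x | cdf μ x ≤ s}
  rcases A.eq_empty_or_nonempty with hA | hA
  · obtain rfl : s = 0 := by
      refine le_antisymm (not_lt.1 fun hs => ?_) hs0
      obtain ⟨x, hx⟩ := ((tendsto_cdf_atBot μ).eventually (eventually_lt_nhds hs)).exists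
      exact hA.subset (show x ∈ A from hx.le)
    simp [hA]
  have hbdd : BddAbove A := by
    obtain ⟨b, hb⟩ := ((tendsto_cdf_atTop μ).eventually (eventually_gt_nhds hs1)).exists
    exact ⟨b, fun x hx => not_lt.1 fun hbx => (hb.trans_le (monotone_cdf μ hbx.le)).not_ge hx⟩
  set a := sSup A
  have haA : a ∈ A := (isClosed_le hc continuous_const).csSup_mem hA hbdd
  have hA_eq : A = Iic a :=
    Subset.antisymm (fun x hx => le_csSup hbdd hx) fun x hx => (monotone_cdf μ hx).trans haA
  have hs_le : s ≤ cdf μ a := by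
    have hIoi : Ioi a ⊆ {x | s ≤ cdf μ x} := fun x hx =>
      show s ≤ cdf μ x from not_lt.1 fun h => (le_csSup hbdd h.le).not_gt hx
    exact (isClosed_le continuous_const hc).closure_subset_iff.2 hIoi
      (by rw [closure_Ioi]; exact self_mem_Ici)
  rw [hA_eq, ← ofReal_cdf, le_antisymm haA hs_le]

lemma map_cdf_of_continuous (hc : Continuous (cdf μ)) :
    μ.map (cdf μ) = volume.restrict (Ioc 0 1) := by
  refine Measure.ext_of_Iic _ _ fun s => ?_
  rw [Measure.map_apply hc.measurable measurableSet_Iic, Measure.restrict_apply measurableSet_Iic]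
  rcases lt_or_ge s 0 with hs0 | hs0
  · have h₁ : cdf μ ⁻¹' Iic s = ∅ :=
      eq_empty_of_forall_notMem fun x hx => (hs0.trans_le (cdf_nonneg μ x)).not_ge hx
    have h₂ : Iic s ∩ Ioc 0 1 = ∅ :=
      eq_empty_of_forall_notMem fun x hx => (hx.2.1.trans_le hx.1).not_ge hs0.le
    simp [h₁, h₂]
  rcases lt_or_ge s 1 with hs1 | hs1
  · have h : Iic s ∩ Ioc 0 1 = Ioc 0 s := by
      rw [inter_comm, Ioc_inter_Iic, min_eq_right hs1.le]
    rw [h, Real.volume_Ioc, sub_zero]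
    exact measure_cdf_le_of_continuous hc hs0 hs1
  · have h₁ : cdf μ ⁻¹' Iic s = univ :=
      eq_univ_of_forall fun x => (cdf_le_one μ x).trans hs1
    have h₂ : Iic s ∩ Ioc 0 1 = Ioc 0 1 := inter_eq_self_of_subset_right fun x hx => hx.2.trans hs1
    simp [h₁, h₂]

lemma integral_one_sub_cdf_pow (hc : Continuous (cdf μ)) (n : ℕ) :
    ∫ x, (1 - cdf μ x) ^ n ∂μ = 1 / (n + 1) := by
  have hf : Measurable fun u : ℝ => (1 - u) ^ n := by fun_prop
  calc ∫ x, (1 - cdf μ x) ^ n ∂μ = ∫ u in Ioc 0 1, (1 - u) ^ n := by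
        rw [← map_cdf_of_continuous hc, integral_map hc.aemeasurable hf.aestronglyMeasurable]
    _ = ∫ u in (0 : ℝ)..1, (1 - u) ^ n := (intervalIntegral.integral_of_le zero_le_one).symm
    _ = 1 / (n + 1) := by simp [intervalIntegral.integral_comp_sub_left fun u => u ^ n]

end cdf

section iid

open Finset

variable {E : Type*} [MeasurableSpace E] {ν : Measure E} [IsProbabilityMeasure ν]

lemma integral_finset_prod_eq_pow {ι : Type*} [Fintype ι] [DecidableEq ι] (f : E → ℝ)
    (s : Finset ι) :
    ∫ w, ∏ i ∈ s, f (w i) ∂(Measure.pi fun _ : ι => ν) = (∫ x, f x ∂ν) ^ #s := by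
  have h := integral_fintype_prod_eq_prod (μ := fun _ : ι => ν) fun i x => if i ∈ s then f x else 1
  have hite (i : ι) :
      ∫ x, (if i ∈ s then f x else 1) ∂ν = if i ∈ s then ∫ x, f x ∂ν else 1 := by
    split_ifs <;> simp
  simp only [prod_ite_mem, Finset.univ_inter, hite] at h
  rw [h, prod_const]

lemma integral_pi_prod_zero_succ {n : ℕ} {g : E → E → ℝ} (hg : Measurable (Function.uncurry g))
    {C : ℝ} (hgC : ∀ z w, ‖g z w‖ ≤ C) (s : Finset (Fin n)) :
    ∫ y, ∏ i ∈ s, g (y 0) (y i.succ) ∂(Measure.pi fun _ : Fin (n + 1) => ν) =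
      ∫ z, (∫ w, g z w ∂ν) ^ #s ∂ν := by
  rw [← (measurePreserving_piFinSuccAbove (fun _ : Fin (n + 1) => ν) 0).symm.integral_comp']
  have hmeas : Measurable fun x : E × (Fin n → E) => ∏ i ∈ s, g x.1 (x.2 i) :=
    Finset.measurable_prod _ fun i _ =>
      hg.comp (f := fun x : E × (Fin n → E) => (x.1, x.2 i)) (by fun_prop)
  have hint : Integrable (fun x : E × (Fin n → E) => ∏ i ∈ s, g x.1 (x.2 i))
      (ν.prod (Measure.pi fun _ : Fin n => ν)) := by
    refine .of_bound hmeas.aestronglyMeasurable (C ^ #s) (.of_forall fun x => ?_)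
    rw [norm_prod, ← prod_const]
    exact prod_le_prod (fun _ _ => norm_nonneg _) fun i _ => hgC _ _
  have hcons (x : E × (Fin n → E)) :
      (MeasurableEquiv.piFinSuccAbove (fun _ : Fin (n + 1) => E) 0).symm x = Fin.cons x.1 x.2 := by
    simp only [MeasurableEquiv.piFinSuccAbove_symm_apply, Fin.insertNthEquiv, Fin.zero_succAbove,
      Fin.insertNth_zero', Fin.removeNth_zero, Equiv.coe_fn_mk]
  simp only [hcons, Fin.cons_zero, Fin.cons_succ]
  rw [integral_prod _ hint]
  simp_rw [integral_finset_prod_eq_pow]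

lemma integral_prod_zero_succ_of_iIndepFun {Ω : Type*} [MeasurableSpace Ω] {P : Measure Ω}
    {n : ℕ} {Z : Fin (n + 1) → Ω → E} (hZ : ∀ i, AEMeasurable (Z i) P) (hindep : iIndepFun Z P)
    (hlaw : ∀ i, P.map (Z i) = ν) {g : E → E → ℝ} (hg : Measurable (Function.uncurry g))
    {C : ℝ} (hgC : ∀ z w, ‖g z w‖ ≤ C) (s : Finset (Fin n)) :
    ∫ ω, ∏ i ∈ s, g (Z 0 ω) (Z i.succ ω) ∂P = ∫ z, (∫ w, g z w ∂ν) ^ #s ∂ν := by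
  have hmeas : Measurable fun y : Fin (n + 1) → E => ∏ i ∈ s, g (y 0) (y i.succ) :=
    Finset.measurable_prod _ fun i _ =>
      hg.comp (f := fun y : Fin (n + 1) → E => (y 0, y i.succ)) (by fun_prop)
  rw [← integral_pi_prod_zero_succ hg hgC, ← funext hlaw, ← hindep.map_fun_eq_pi_map hZ,
    integral_map (aemeasurable_pi_lambda _ hZ) hmeas.aestronglyMeasurable]

end iid

section kernel

variable {β : Type*} [MeasurableSpace β]

lemma measurable_indicator_Ioi_prod {t : Set β} (ht : MeasurableSet t) :
    Measurable (Function.uncurry fun z w : ℝ × β =>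
      (Ioi z.1 ×ˢ t).indicator (1 : ℝ × β → ℝ) w) := by
  have hS : MeasurableSet {q : (ℝ × β) × (ℝ × β) | q.1.1 < q.2.1 ∧ q.2.2 ∈ t} :=
    (measurableSet_lt measurable_fst.fst measurable_snd.fst).inter (measurable_snd.snd ht)
  exact measurable_const.indicator hS

lemma integral_integral_indicator_Ioi_prod_pow {μ : Measure ℝ} [IsProbabilityMeasure μ]
    {ρ : Measure β} [IsProbabilityMeasure ρ] (hc : Continuous (cdf μ)) {t : Set β}
    (ht : MeasurableSet t) (n : ℕ) :
    ∫ z, (∫ w, (Ioi z.1 ×ˢ t).indicator 1 w ∂(μ.prod ρ)) ^ n ∂(μ.prod ρ) =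
      ρ.real t ^ n / (n + 1) := by
  have hinner (x : ℝ) :
      ∫ w, (Ioi x ×ˢ t).indicator 1 w ∂(μ.prod ρ) = ρ.real t * (1 - cdf μ x) := by
    rw [integral_indicator_one (measurableSet_Ioi.prod ht), measureReal_prod_prod, ← compl_Iic,
      probReal_compl_eq_one_sub measurableSet_Iic, ← cdf_eq_real, mul_comm]
  simp_rw [hinner, mul_pow]
  rw [integral_fun_fst fun x => ρ.real t ^ n * (1 - cdf μ x) ^ n, probReal_univ, one_smul,
    integral_const_mul, integral_one_sub_cdf_pow hc, mul_one_div]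

end kernel

lemma ite_lt_min_and_eq {β : Type*} [DecidableEq β] (z w₁ w₂ : ℝ × β) (k : β) :
    (if min w₁.1 w₂.1 > z.1 ∧ w₁.2 = k ∧ w₂.2 = k then (1 : ℝ) else 0) =
      (Ioi z.1 ×ˢ {k}).indicator 1 w₁ * (Ioi z.1 ×ˢ {k}).indicator 1 w₂ := by
  simp only [indicator_apply, mem_prod, mem_Ioi, mem_singleton_iff, gt_iff_lt, lt_min_iff,
    Pi.one_apply]
  split_ifs <;> simp_all

theorem stmt_13_general {Ω : Type*} [MeasurableSpace Ω] (P : Measure Ω) [IsProbabilityMeasure P]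
    {K : ℕ} (X : Ω → ℝ) (Y : Ω → Fin K)
    (F : ℝ → ℝ) (hF : ∀ x, F x = (P {ω | X ω ≤ x}).toReal) (hFc : Continuous F)
    (p : Fin K → ℝ) (hp : ∀ k, p k = (P {ω | Y ω = k}).toReal)
    (hindXY : IndepFun X Y P)
    (Z : Fin 5 → Ω → ℝ × Fin K)
    (hindep : iIndepFun Z P)
    (hident : ∀ i, IdentDistrib (Z i) (fun ω => (X ω, Y ω)) P P) (k : Fin K) :
    (∫ ω, (if min (Z 1 ω).1 (Z 2 ω).1 > (Z 0 ω).1 ∧ (Z 1 ω).2 = k ∧ (Z 2 ω).2 = k then (1:ℝ) else 0) * (if min (Z 3 ω).1 (Z 4 ω).1 > (Z 0 ω).1 ∧ (Z 3 ω).2 = k ∧ (Z 4 ω).2 = k then (1:ℝ) else 0) ∂P)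
      - (∫ ω, (if min (Z 1 ω).1 (Z 2 ω).1 > (Z 0 ω).1 ∧ (Z 1 ω).2 = k ∧ (Z 2 ω).2 = k then (1:ℝ) else 0) ∂P) * (∫ ω, (if min (Z 3 ω).1 (Z 4 ω).1 > (Z 0 ω).1 ∧ (Z 3 ω).2 = k ∧ (Z 4 ω).2 = k then (1:ℝ) else 0) ∂P) = (4 / 45) * p k ^ 4 := by
  have hXY : AEMeasurable (fun ω => (X ω, Y ω)) P := (hident 0).aemeasurable_snd
  have hX : AEMeasurable X P := measurable_fst.comp_aemeasurable hXY
  have hY : AEMeasurable Y P := measurable_snd.comp_aemeasurable hXY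
  have : IsProbabilityMeasure (P.map X) := Measure.isProbabilityMeasure_map hX
  have : IsProbabilityMeasure (P.map Y) := Measure.isProbabilityMeasure_map hY
  have hcdf : cdf (P.map X) = F := funext fun x => by
    rw [cdf_eq_real, measureReal_def, Measure.map_apply_of_aemeasurable hX measurableSet_Iic, hF]
    rfl
  have hpk : (P.map Y).real {k} = p k := by
    rw [measureReal_def, Measure.map_apply_of_aemeasurable hY (measurableSet_singleton k), hp]
    rfl
  have hmoment (s : Finset (Fin 4)) :
      ∫ ω, ∏ i ∈ s, (Ioi (Z 0 ω).1 ×ˢ {k}).indicator 1 (Z i.succ ω) ∂P =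
        p k ^ s.card / (s.card + 1) := by
    rw [integral_prod_zero_succ_of_iIndepFun (fun i => (hident i).aemeasurable_fst) hindep
      (fun i => (hident i).map_eq.trans (hindXY.map_prod_eq_prod_map_map hX hY))
      (measurable_indicator_Ioi_prod (measurableSet_singleton k))
      (fun _ w => (norm_indicator_le_norm_self (1 : ℝ × Fin K → ℝ) w).trans_eq norm_one) s,
      integral_integral_indicator_Ioi_prod_pow (hcdf ▸ hFc) (measurableSet_singleton k), hpk]
  have h01 := hmoment {0, 1}
  have h23 := hmoment {2, 3}
  have hall := hmoment Finset.univ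
  simp only [Finset.prod_pair (by decide : (0 : Fin 4) ≠ 1),
    Finset.prod_pair (by decide : (2 : Fin 4) ≠ 3), Fin.prod_univ_four, Fin.reduceSucc,
    Finset.card_pair (by decide : (0 : Fin 4) ≠ 1), Finset.card_pair (by decide : (2 : Fin 4) ≠ 3),
    Finset.card_univ, Fintype.card_fin] at h01 h23 hall
  simp only [ite_lt_min_and_eq, ← mul_assoc]
  rw [h01, h23, hall]
  push_cast
  ring

/-- Cov(I(min(X2,X3)>X1, Y2=Y3=k), I(min(X4,X5)>X1, Y4=Y5=k)) = (4/45) p_k⁴. -/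
theorem stmt_13 {Ω : Type*} [MeasurableSpace Ω] (P : Measure Ω) [IsProbabilityMeasure P]
    {K : ℕ} (X : Ω → ℝ) (Y : Ω → Fin K) (hX : Measurable X) (hY : Measurable Y)
    (F : ℝ → ℝ) (hF : ∀ x, F x = (P {ω | X ω ≤ x}).toReal) (hFc : Continuous F)
    (p : Fin K → ℝ) (hp : ∀ k, p k = (P {ω | Y ω = k}).toReal) (hppos : ∀ k, 0 < p k)
    (hindXY : IndepFun X Y P)
    (Z : Fin 5 → Ω → ℝ × Fin K) (hZ : ∀ i, Measurable (Z i))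
    (hindep : iIndepFun Z P)
    (hident : ∀ i, IdentDistrib (Z i) (fun ω => (X ω, Y ω)) P P) (k : Fin K) :
    (∫ ω, (if min (Z 1 ω).1 (Z 2 ω).1 > (Z 0 ω).1 ∧ (Z 1 ω).2 = k ∧ (Z 2 ω).2 = k then (1:ℝ) else 0) * (if min (Z 3 ω).1 (Z 4 ω).1 > (Z 0 ω).1 ∧ (Z 3 ω).2 = k ∧ (Z 4 ω).2 = k then (1:ℝ) else 0) ∂P)
      - (∫ ω, (if min (Z 1 ω).1 (Z 2 ω).1 > (Z 0 ω).1 ∧ (Z 1 ω).2 = k ∧ (Z 2 ω).2 = k then (1:ℝ) else 0) ∂P) * (∫ ω, (if min (Z 3 ω).1 (Z 4 ω).1 > (Z 0 ω).1 ∧ (Z 3 ω).2 = k ∧ (Z 4 ω).2 = k then (1:ℝ) else 0) ∂P) = (4 / 45) * p k ^ 4 :=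
  stmt_13_general P X Y F hF hFc p hp hindXY Z hindep hident k
end
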